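/- arXiv:2603.10626 — 2 statements merged into one kernel-verified Lean document; each statement's English description precedes it below -/
import Mathlib

section
/- Let p be a prime and let R = 𝔽_p[x^{±1}, y^{±1}] be the ring of Laurent polynomials in two variables over 𝔽_p, i.e. the group algebra of ℤ × ℤ over ZMod p, in which the monomial x^n y^m is the basis element at (n, m). Let A ⊆ R be the 𝔽_p-subalgebra generated by the four elements x·y^{-1}, x^{-1}·y, x, and y. Then the quotient of R by A, taken as 𝔽_p-modules (equivalently, as abelian groups), is isomorphic to the free 𝔽_p-module on the set {(n, m) ∈ ℤ × ℤ : n + m < 0}; equivalently, to x^{-1}·𝔽_p[x^{-1}, (y/x)^{±1}], the 𝔽_p-span of the monomials x^{-1-k}·(y·x^{-1})^{j} for k ∈ ℕ and j ∈ ℤ, which is free on ℕ × ℤ. -/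
open Finsupp Submodule

abbrev Rp (p : ℕ) := AddMonoidAlgebra (ZMod p) (ℤ × ℤ)

noncomputable abbrev Spos : Set (ℤ × ℤ) := {a | 0 ≤ a.1 + a.2}

def genSet (p : ℕ) : Set (Rp p) :=
  {AddMonoidAlgebra.single ((1 : ℤ), (-1 : ℤ)) (1 : ZMod p),
   AddMonoidAlgebra.single ((-1 : ℤ), (1 : ℤ)) (1 : ZMod p),
   AddMonoidAlgebra.single ((1 : ℤ), (0 : ℤ)) (1 : ZMod p),
   AddMonoidAlgebra.single ((0 : ℤ), (1 : ℤ)) (1 : ZMod p)}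

lemma closure_eq (p : ℕ) [Fact p.Prime] :
    (Submonoid.closure (genSet p) : Set (Rp p)) =
      (fun a : ℤ × ℤ => AddMonoidAlgebra.single a (1 : ZMod p)) '' Spos := by
  apply le_antisymm
  · -- closure ≤ image submonoid
    have : Submonoid.closure (genSet p) ≤
        { carrier := (fun a : ℤ × ℤ => AddMonoidAlgebra.single a (1 : ZMod p)) '' Spos
          mul_mem' := by
            rintro _ _ ⟨a, ha, rfl⟩ ⟨b, hb, rfl⟩
            refine ⟨a + b, ?_, ?_⟩
            · simp only [Spos, Set.mem_setOf_eq, Prod.fst_add, Prod.snd_add] at *; omega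
            · rw [AddMonoidAlgebra.single_mul_single, one_mul]
          one_mem' := ⟨0, by simp [Spos], by
            rw [AddMonoidAlgebra.one_def]⟩ } := by
      rw [Submonoid.closure_le]
      rintro x hx
      rcases hx with rfl | rfl | rfl | rfl
      · exact ⟨(1, -1), by norm_num [Spos], rfl⟩
      · exact ⟨(-1, 1), by norm_num [Spos], rfl⟩
      · exact ⟨(1, 0), by norm_num [Spos], rfl⟩
      · exact ⟨(0, 1), by norm_num [Spos], rfl⟩
    exact this
  · rintro _ ⟨a, ha, rfl⟩
    simp only [Spos, Set.mem_setOf_eq] at ha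
    have hx : AddMonoidAlgebra.single ((1:ℤ), (0:ℤ)) (1 : ZMod p) ∈ Submonoid.closure (genSet p) :=
      Submonoid.subset_closure (by simp [genSet])
    have hy : AddMonoidAlgebra.single ((0:ℤ), (1:ℤ)) (1 : ZMod p) ∈ Submonoid.closure (genSet p) :=
      Submonoid.subset_closure (by simp [genSet])
    have hu : AddMonoidAlgebra.single ((1:ℤ), (-1:ℤ)) (1 : ZMod p) ∈ Submonoid.closure (genSet p) :=
      Submonoid.subset_closure (by simp [genSet])
    have hv : AddMonoidAlgebra.single ((-1:ℤ), (1:ℤ)) (1 : ZMod p) ∈ Submonoid.closure (genSet p) :=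
      Submonoid.subset_closure (by simp [genSet])
    rcases le_or_gt 0 a.2 with h2 | h2
    · rcases le_or_gt 0 a.1 with h1 | h1
      · have := Submonoid.mul_mem _ (Submonoid.pow_mem _ hx a.1.toNat)
          (Submonoid.pow_mem _ hy a.2.toNat)
        rwa [AddMonoidAlgebra.single_pow, AddMonoidAlgebra.single_pow,
          AddMonoidAlgebra.single_mul_single, one_pow, one_pow, one_mul,
          show (a.1.toNat • ((1:ℤ), (0:ℤ)) + a.2.toNat • ((0:ℤ), (1:ℤ))) = a by
            simp [Prod.ext_iff]; omega] at this
      · have := Submonoid.mul_mem _ (Submonoid.pow_mem _ hy (a.1 + a.2).toNat)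
          (Submonoid.pow_mem _ hv (-a.1).toNat)
        rwa [AddMonoidAlgebra.single_pow, AddMonoidAlgebra.single_pow,
          AddMonoidAlgebra.single_mul_single, one_pow, one_pow, one_mul,
          show ((a.1 + a.2).toNat • ((0:ℤ), (1:ℤ)) + (-a.1).toNat • ((-1:ℤ), (1:ℤ))) = a by
            simp [Prod.ext_iff]; omega] at this
    · have := Submonoid.mul_mem _ (Submonoid.pow_mem _ hx (a.1 + a.2).toNat)
        (Submonoid.pow_mem _ hu (-a.2).toNat)
      rwa [AddMonoidAlgebra.single_pow, AddMonoidAlgebra.single_pow,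
        AddMonoidAlgebra.single_mul_single, one_pow, one_pow, one_mul,
        show ((a.1 + a.2).toNat • ((1:ℤ), (0:ℤ)) + (-a.2).toNat • ((1:ℤ), (-1:ℤ))) = a by
          simp [Prod.ext_iff]; omega] at this

lemma adjoin_eq_supported (p : ℕ) [Fact p.Prime] :
    Subalgebra.toSubmodule (Algebra.adjoin (ZMod p) (genSet p)) =
      AddMonoidAlgebra.supported (ZMod p) (ZMod p) Spos := by
  rw [Algebra.adjoin_eq_span, closure_eq, AddMonoidAlgebra.supported_eq_span_single]


lemma compl_iso (p : ℕ) [Fact p.Prime] :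
    Nonempty ((Rp p ⧸ AddMonoidAlgebra.supported (ZMod p) (ZMod p) Spos)
      ≃ₗ[ZMod p] ({q : ℤ × ℤ // q.1 + q.2 < 0} →₀ ZMod p)) := by
  have hcompl : IsCompl (Finsupp.supported (ZMod p) (ZMod p) Spos)
      (Finsupp.supported (ZMod p) (ZMod p) Sposᶜ) := by
    constructor
    · exact Finsupp.disjoint_supported_supported disjoint_compl_right
    · rw [codisjoint_iff, ← Finsupp.supported_union, Set.union_compl_self,
        Finsupp.supported_univ]
  refine ⟨(Submodule.Quotient.equiv _ _ (AddMonoidAlgebra.coeffLinearEquiv (ZMod p))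
    (Submodule.map_comap_eq_of_surjective
      (AddMonoidAlgebra.coeffLinearEquiv (ZMod p)).surjective _)).trans
    ((Submodule.quotientEquivOfIsCompl _ _ hcompl).trans
    ((Finsupp.supportedEquivFinsupp _).trans (Finsupp.domLCongr ?_)))⟩
  exact Equiv.subtypeEquivRight (fun q => by simp [Spos, not_le])

def eNat : {q : ℤ × ℤ // q.1 + q.2 < 0} ≃ ℕ × ℤ where
  toFun q := ((-(q.1.1 + q.1.2) - 1).toNat, q.1.2)
  invFun x := ⟨(-(x.1 : ℤ) - 1 - x.2, x.2), by simp; omega⟩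
  left_inv q := by
    have := q.2
    ext <;> simp <;> omega
  right_inv x := by
    ext <;> simp <;> omega




/-- **Proposition 2.7 (alglemma).**
Let `R = 𝔽_p[x^{±1}, y^{±1}]` be the Laurent polynomial ring in two variables over
`𝔽_p = ZMod p`, realized as the group algebra `AddMonoidAlgebra (ZMod p) (ℤ × ℤ)`,
where the monomial `x^n y^m` is the basis element at `(n, m)`.  Let `A` be the
`𝔽_p`-subalgebra generated by `x·y⁻¹`, `x⁻¹·y`, `x` and `y`.  Then the quotient of
`R` by (the underlying `𝔽_p`-submodule of) `A` is isomorphic, as an `𝔽_p`-module,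
to the free `𝔽_p`-module on `{(n, m) : n + m < 0}`; equivalently, to
`x⁻¹·𝔽_p[x⁻¹, (y/x)^{±1}]`, which is free on `ℕ × ℤ`. -/
theorem laurent_quotient_by_adjoin_iso (p : ℕ) [Fact p.Prime] :
    Nonempty
      ((AddMonoidAlgebra (ZMod p) (ℤ × ℤ) ⧸
          Subalgebra.toSubmodule (Algebra.adjoin (ZMod p)
            ({AddMonoidAlgebra.single ((1 : ℤ), (-1 : ℤ)) (1 : ZMod p),
              AddMonoidAlgebra.single ((-1 : ℤ), (1 : ℤ)) (1 : ZMod p),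
              AddMonoidAlgebra.single ((1 : ℤ), (0 : ℤ)) (1 : ZMod p),
              AddMonoidAlgebra.single ((0 : ℤ), (1 : ℤ)) (1 : ZMod p)} :
              Set (AddMonoidAlgebra (ZMod p) (ℤ × ℤ)))))
        ≃ₗ[ZMod p] ({q : ℤ × ℤ // q.1 + q.2 < 0} →₀ ZMod p)) ∧
    Nonempty
      ((AddMonoidAlgebra (ZMod p) (ℤ × ℤ) ⧸
          Subalgebra.toSubmodule (Algebra.adjoin (ZMod p)
            ({AddMonoidAlgebra.single ((1 : ℤ), (-1 : ℤ)) (1 : ZMod p),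
              AddMonoidAlgebra.single ((-1 : ℤ), (1 : ℤ)) (1 : ZMod p),
              AddMonoidAlgebra.single ((1 : ℤ), (0 : ℤ)) (1 : ZMod p),
              AddMonoidAlgebra.single ((0 : ℤ), (1 : ℤ)) (1 : ZMod p)} :
              Set (AddMonoidAlgebra (ZMod p) (ℤ × ℤ)))))
        ≃ₗ[ZMod p] ((ℕ × ℤ) →₀ ZMod p)) := by
  have h : Subalgebra.toSubmodule (Algebra.adjoin (ZMod p)
            ({AddMonoidAlgebra.single ((1 : ℤ), (-1 : ℤ)) (1 : ZMod p),
              AddMonoidAlgebra.single ((-1 : ℤ), (1 : ℤ)) (1 : ZMod p),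
              AddMonoidAlgebra.single ((1 : ℤ), (0 : ℤ)) (1 : ZMod p),
              AddMonoidAlgebra.single ((0 : ℤ), (1 : ℤ)) (1 : ZMod p)} :
              Set (AddMonoidAlgebra (ZMod p) (ℤ × ℤ)))) =
      AddMonoidAlgebra.supported (ZMod p) (ZMod p) Spos := adjoin_eq_supported p
  rw [h]
  obtain ⟨e⟩ := compl_iso p
  exact ⟨⟨e⟩, ⟨e.trans (Finsupp.domLCongr eNat)⟩⟩
end

section
/- Let p be an odd prime and let r ≥ 1 be a natural number. Let k : Fin p × Fin p → ℕ be a function with k(0, 0) = 0, and let d : Fin r → ℕ. Assume: (i) ∑_{j=0}^{p−1} ∑_{i=0}^{p−1} k(j, i) ≤ r; (ii) the number of indices s ∈ Fin r with d(s) > 0 is at least r − ∑_{j,i} k(j, i); and (iii) 2·r·p = ∑_{j=0}^{p−1} ∑_{i=0}^{p−1} k(j, i)·(2·p·j + 2·i) + 2·p² · ∑_{s} d(s). Then ∑_{j=0}^{p−1} ∑_{i=0}^{p−1} 2·p·j·k(j, i) + (2·p² − 4)·∑_{s} d(s) > 0. -/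
/-! If the fixed dimension vanished, then `d = 0` (as `2p² - 4 > 0`) and `k (j, i) = 0` for all
`j ≠ 0`. Every remaining summand of the total dimension has weight `2i ≤ 2(p - 1)`, so the total
dimension is at most `2(p - 1)·∑ k ≤ 2(p - 1) r < 2pr`, contradicting its vanishing. -/

open Finset

lemma Finset.sum_mul_le_mul_sum_of_le {ι : Type*} (s : Finset ι) (k w : ι → ℕ) (c : ℕ)
    (hw : ∀ x ∈ s, k x ≠ 0 → w x ≤ c) :
    ∑ x ∈ s, k x * w x ≤ c * ∑ x ∈ s, k x := by
  rw [mul_sum]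
  refine sum_le_sum fun x hx => ?_
  by_cases hk : k x = 0
  · simp [hk]
  · rw [mul_comm]
    exact Nat.mul_le_mul_right _ (hw x hx hk)

theorem pnof_claim_general (p r : ℕ) (hp : p.Prime) (hr : 1 ≤ r)
    (k : Fin p × Fin p → ℕ) (d : Fin r → ℕ)
    (h1 : ∑ j : Fin p, ∑ i : Fin p, k (j, i) ≤ r)
    (h3 : 2 * r * p =
      (∑ j : Fin p, ∑ i : Fin p, k (j, i) * (2 * p * (j : ℕ) + 2 * (i : ℕ)))
        + 2 * p ^ 2 * ∑ s, d s) :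
    0 < (∑ j : Fin p, ∑ i : Fin p, 2 * p * (j : ℕ) * k (j, i))
        + (2 * p ^ 2 - 4) * ∑ s, d s := by
  by_contra! hzero
  obtain ⟨hfix, hd⟩ := Nat.add_eq_zero_iff.mp (Nat.le_zero.mp hzero)
  have hp2 := hp.two_le
  have hp_sq : 4 ≤ p ^ 2 := by nlinarith
  have hd0 : ∑ s, d s = 0 := (mul_eq_zero.mp hd).resolve_left (by omega)
  simp only [← Fintype.sum_prod_type'] at hfix h1 h3
  have hweight : ∀ x ∈ (univ : Finset (Fin p × Fin p)), k x ≠ 0 →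
      2 * p * (x.1 : ℕ) + 2 * (x.2 : ℕ) ≤ 2 * (p - 1) := by
    rintro ⟨j, i⟩ - hk
    have hj : (j : ℕ) = 0 := by
      simpa [hp.ne_zero, hk] using sum_eq_zero_iff.mp hfix (j, i) (mem_univ _)
    simp only [hj]
    omega
  have hlt : 2 * (p - 1) * r < 2 * r * p := by
    have hp1 : p - 1 + 1 = p := Nat.sub_add_cancel hp.one_le
    nlinarith
  rw [hd0, mul_zero, add_zero] at h3
  refine hlt.not_ge ?_
  calc 2 * r * p ≤ 2 * (p - 1) * ∑ x, k x := h3 ▸ univ.sum_mul_le_mul_sum_of_le k _ _ hweight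
    _ ≤ 2 * (p - 1) * r := Nat.mul_le_mul_left _ h1

/-- The arithmetic "Claim" in the proof of Proposition 6.2 (pnof).
Let `p` be an odd prime and `r ≥ 1`.  Let `k : Fin p × Fin p → ℕ` with `k(0,0) = 0`
and `d : Fin r → ℕ` satisfy:
(i)   `∑_{j,i} k(j,i) ≤ r`;
(ii)  at least `r − ∑_{j,i} k(j,i)` of the `d s` are strictly positive;
(iii) `2rp = ∑_{j,i} k(j,i)·(2pj + 2i) + 2p²·∑_s d(s)`
(vanishing of the total dimension `|res_K(α)|`).  Then
`∑_{j,i} 2pj·k(j,i) + (2p² − 4)·∑_s d(s) > 0` (the `K`-fixed dimension is positive). -/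
theorem pnof_claim (p r : ℕ) (hp : p.Prime) (hodd : Odd p) (hr : 1 ≤ r)
    (k : Fin p × Fin p → ℕ) (d : Fin r → ℕ)
    (hk0 : k (⟨0, hp.pos⟩, ⟨0, hp.pos⟩) = 0)
    (h1 : ∑ j : Fin p, ∑ i : Fin p, k (j, i) ≤ r)
    (h2 : r - ∑ j : Fin p, ∑ i : Fin p, k (j, i) ≤
      (Finset.univ.filter fun s : Fin r => 0 < d s).card)
    (h3 : 2 * r * p =
      (∑ j : Fin p, ∑ i : Fin p, k (j, i) * (2 * p * (j : ℕ) + 2 * (i : ℕ)))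
        + 2 * p ^ 2 * ∑ s, d s) :
    0 < (∑ j : Fin p, ∑ i : Fin p, 2 * p * (j : ℕ) * k (j, i))
        + (2 * p ^ 2 - 4) * ∑ s, d s :=
  pnof_claim_general p r hp hr k d h1 h3
end
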